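/- Suppose in each pass of a refinement loop, every remaining non-singleton bucket ends with sorting depth at least (C+1) times its depth at the start of the pass, for a constant C ≥ 1, and initial depth at least 1. Then after at most ⌈log_{C+1} n⌉ passes every bucket's depth exceeds n, hence all buckets are singletons, since suffixes of a string of length n that agree on their first n characters are equal. -/
import Mathlib


/-- If in each pass of the refinement loop every remaining non-singleton bucket ends
with sorting depth at least `(C+1)` times its depth at the start of the pass
(`C ≥ 1`), starting from depth at least `1`, then after at most `⌈log_{C+1} n⌉` passes
(one extra pass covers the rounding) every bucket's depth exceeds `n`; and suffixes of
a string of length at most `n` that agree on their first `n` characters are equal. -/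
theorem refinement_depth_growth (C n : ℕ) (hC : 1 ≤ C) (hn : 1 ≤ n)
    (depth : ℕ → ℕ) (h0 : 1 ≤ depth 0)
    (hstep : ∀ t : ℕ, (C + 1) * depth t ≤ depth (t + 1)) :
    n < depth (Nat.clog (C + 1) n + 1) ∧
    ∀ (α : Type) (w : List α) (i j : ℕ), w.length ≤ n →
      i < w.length → j < w.length →
      (∀ t < n, w[i + t]? = w[j + t]?) → i = j := by
  have hb : 1 < C + 1 := by omega
  have hpow : ∀ t, (C + 1) ^ t ≤ depth t := by
    intro t
    induction t with
    | zero => simpa using h0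
    | succ t ih =>
        calc (C + 1) ^ (t + 1) = (C + 1) * (C + 1) ^ t := by ring
        _ ≤ (C + 1) * depth t := Nat.mul_le_mul_left _ ih
        _ ≤ depth (t + 1) := hstep t
  constructor
  · have hclog : n ≤ (C + 1) ^ Nat.clog (C + 1) n := Nat.le_pow_clog hb n
    have : n < (C + 1) ^ (Nat.clog (C + 1) n + 1) := by
      calc n < 2 * n := by omega
      _ ≤ (C + 1) * (C + 1) ^ Nat.clog (C + 1) n :=
          Nat.mul_le_mul (by omega) hclog
      _ = (C + 1) ^ (Nat.clog (C + 1) n + 1) := by ring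
    exact lt_of_lt_of_le this (hpow _)
  · intro α w i j hlen hi hj hagree
    have key : ∀ i j : ℕ, i < w.length → j < w.length →
        (∀ t < n, w[i + t]? = w[j + t]?) → j ≤ i := by
      intro i j hi hj h
      set t := w.length - 1 - i with ht
      have h2 : t < n := by omega
      have hi' : i + t < w.length := by omega
      have hsome : (w[j + t]?).isSome := by
        rw [← h t h2]
        simp [List.getElem?_eq_getElem hi']
      have hj' : j + t < w.length := by
        by_contra hcon
        rw [List.getElem?_eq_none (by omega)] at hsome
        simp at hsome
      omega
    have h1 := key i j hi hj hagree
    have h2 := key j i hj hi (fun t ht => (hagree t ht).symm)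
    omega
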